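/- Let M ∈ 𝓜 be not semi-reduced. Then there exists an elementary unit E of 𝓜 of type (ii) or (iii) and a row index c such that, setting M̂ = E·M, all rows of M̂ except row c coincide with those of M, and every entry of row c of the degree matrix 𝒟(M̂) is strictly smaller than the maximum of row c of 𝒟(M). -/

import Mathlib

open Polynomial Matrix

/-- Membership in the subring `𝓜` of `F[t]^{n×n}`: every entry strictly below the
diagonal vanishes at `t = 0` (i.e. is a multiple of `t`). -/
def InM {F : Type*} [Field F] {n : ℕ} (M : Matrix (Fin n) (Fin n) (Polynomial F)) : Prop :=
  ∀ a b : Fin n, b < a → (M a b).eval 0 = 0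

/-- The degree matrix `𝒟(M)`: `𝒟(M)_{ab} = n·deg(m_{ab}) − a + b`, with the zero
polynomial having degree `−∞` (here `⊥` in `WithBot ℤ`). -/
noncomputable def degMat {F : Type*} [Field F] {n : ℕ}
    (M : Matrix (Fin n) (Fin n) (Polynomial F)) : Matrix (Fin n) (Fin n) (WithBot ℤ) :=
  Matrix.of fun a b =>
    WithBot.map (fun d : ℕ => (n : ℤ) * (d : ℤ) - ((a : ℕ) : ℤ) + ((b : ℕ) : ℤ))
      ((M a b).degree)

/-- `M` is semi-reduced if the maxima of the non-trivial rows of `𝒟(M)` occur in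
pairwise different columns. -/
def SemiReduced {F : Type*} [Field F] {n : ℕ}
    (M : Matrix (Fin n) (Fin n) (Polynomial F)) : Prop :=
  ∀ a a' b : Fin n, a ≠ a' → M a ≠ 0 → M a' ≠ 0 →
    degMat M a b = Finset.univ.sup (fun c => degMat M a c) →
    degMat M a' b = Finset.univ.sup (fun c => degMat M a' c) → False

/-- Elementary units of `𝓜` of type (ii) or (iii): `I + t^N α E_{ab}` with `N ≥ 0` and
`a < b`, or with `N > 0` and `b < a`. -/
def IsElemUnitOffDiag {F : Type*} [Field F] {n : ℕ}
    (E : Matrix (Fin n) (Fin n) (Polynomial F)) : Prop :=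
  (∃ (a b : Fin n) (N : ℕ) (α : F), a < b ∧
      E = 1 + Matrix.single a b (Polynomial.X ^ N * Polynomial.C α)) ∨
  (∃ (a b : Fin n) (N : ℕ) (α : F), b < a ∧ 0 < N ∧
      E = 1 + Matrix.single a b (Polynomial.X ^ N * Polynomial.C α))

/-!
Write `𝒟(M)_{aj} = (n·deg m_{aj} + j) − a`. The weighted degrees `n·d + j` of distinct columns
are distinct (they differ mod `n`), so in a row the maximum of `𝒟` is attained in a single column.
If `M` is not semi-reduced, two rows `c ≠ o` attain their maxima in the same column `b`; order
them so that `deg m_{cb} ≥ deg m_{ob}`, with `c < o` in case of equality. Adding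
`t^N α` times row `o` to row `c`, with `N = deg m_{cb} − deg m_{ob}` and `α` cancelling the
leading coefficient of `m_{cb}`, keeps every weighted degree of row `c` at most the old maximum;
equality could only occur in column `b`, where the degree has dropped.
-/

section WeightedDegree

variable {R : Type*} [Semiring R]

def weightedDegree (n j : ℕ) (p : R[X]) : WithBot ℕ :=
  p.degree.map fun d => n * d + j

theorem monotone_withBot_map_mul_add (n j : ℕ) :
    Monotone (WithBot.map fun d : ℕ => n * d + j) :=
  Monotone.withBot_map fun _ _ hde => Nat.add_le_add_right (Nat.mul_le_mul_left n hde) j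

theorem weightedDegree_add_le (n j : ℕ) (p q : R[X]) :
    weightedDegree n j (p + q) ≤ max (weightedDegree n j p) (weightedDegree n j q) :=
  (monotone_withBot_map_mul_add n j (degree_add_le p q)).trans_eq
    (monotone_withBot_map_mul_add n j).map_max

theorem weightedDegree_X_pow_mul_C_mul [NoZeroDivisors R] [Nontrivial R] (n j N : ℕ) {α : R}
    (hα : α ≠ 0) (p : R[X]) :
    weightedDegree n j (X ^ N * C α * p) = weightedDegree n j p + ((n * N : ℕ) : WithBot ℕ) := by
  rcases eq_or_ne p 0 with rfl | hp
  · simp [weightedDegree]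
  rw [weightedDegree, weightedDegree, degree_mul, degree_mul, degree_X_pow, degree_C hα,
    add_zero, degree_eq_natDegree hp, ← Nat.cast_add, Nat.cast_withBot, Nat.cast_withBot,
    WithBot.map_coe, WithBot.map_coe, ← WithBot.coe_natCast, ← WithBot.coe_add, WithBot.coe_inj,
    Nat.cast_id]
  ring

theorem eq_of_weightedDegree_eq {n j b : ℕ} {p q : R[X]} (hj : j < n) (hb : b < n)
    (hq : q ≠ 0) (h : weightedDegree n j p = weightedDegree n b q) :
    j = b ∧ p.degree = q.degree := by
  have hp : p ≠ 0 := by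
    rintro rfl
    rw [weightedDegree, degree_zero, WithBot.map_bot, weightedDegree, degree_eq_natDegree hq,
      Nat.cast_withBot, WithBot.map_coe] at h
    exact WithBot.bot_ne_coe h
  rw [weightedDegree, weightedDegree, degree_eq_natDegree hp, degree_eq_natDegree hq,
    Nat.cast_withBot, Nat.cast_withBot, WithBot.map_coe, WithBot.map_coe, WithBot.coe_inj] at h
  have hjb : j = b := by
    rw [mul_comm n, mul_comm n] at h
    rw [← Nat.mul_add_mod_of_lt hj, h, Nat.mul_add_mod_of_lt hb]
  subst hjb
  have hn : 0 < n := j.zero_le.trans_lt hj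
  exact ⟨rfl, by rw [degree_eq_natDegree hp, degree_eq_natDegree hq,
    Nat.eq_of_mul_eq_mul_left hn (Nat.add_right_cancel h)]⟩

end WeightedDegree

section Cancellation

variable {R : Type*} [Ring R]

theorem ne_zero_of_mul_leadingCoeff_eq_neg {p q : R[X]} {α : R} (hp : p ≠ 0)
    (hα : α * q.leadingCoeff = -p.leadingCoeff) : α ≠ 0 ∧ q ≠ 0 := by
  have h : α * q.leadingCoeff ≠ 0 := by rwa [hα, neg_ne_zero, leadingCoeff_ne_zero]
  exact ⟨left_ne_zero_of_mul h, leadingCoeff_ne_zero.mp (right_ne_zero_of_mul h)⟩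

variable [IsDomain R]

theorem degree_add_X_pow_mul_C_mul_lt {p q : R[X]} {N : ℕ} {α : R} (hp : p ≠ 0)
    (hN : p.natDegree = N + q.natDegree) (hα : α * q.leadingCoeff = -p.leadingCoeff) :
    (p + X ^ N * C α * q).degree < p.degree := by
  obtain ⟨hα0, hq⟩ := ne_zero_of_mul_leadingCoeff_eq_neg hp hα
  have hdeg : (-(X ^ N * C α * q)).degree = p.degree := by
    rw [degree_neg, degree_mul, degree_mul, degree_X_pow, degree_C hα0, add_zero,
      degree_eq_natDegree hq, degree_eq_natDegree hp, hN, Nat.cast_add]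
  have hlc : p.leadingCoeff = (-(X ^ N * C α * q)).leadingCoeff := by
    rw [leadingCoeff_neg, leadingCoeff_mul, leadingCoeff_mul, leadingCoeff_X_pow,
      leadingCoeff_C, one_mul, hα, neg_neg]
  simpa only [sub_neg_eq_add] using degree_sub_lt_left hdeg.symm hp hlc

theorem weightedDegree_add_X_pow_mul_C_mul_lt {n : ℕ} {p q : Fin n → R[X]} {b : Fin n} {N : ℕ}
    {α : R} (hpb : p b ≠ 0) (hN : (p b).natDegree = N + (q b).natDegree)
    (hα : α * (q b).leadingCoeff = -(p b).leadingCoeff)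
    (hp : ∀ j : Fin n, weightedDegree n j (p j) ≤ weightedDegree n b (p b))
    (hq : ∀ j : Fin n, weightedDegree n j (q j) ≤ weightedDegree n b (q b)) (j : Fin n) :
    weightedDegree n j (p j + X ^ N * C α * q j) < weightedDegree n b (p b) := by
  obtain ⟨hα0, hqb⟩ := ne_zero_of_mul_leadingCoeff_eq_neg hpb hα
  have hshift :
      weightedDegree n b (q b) + ((n * N : ℕ) : WithBot ℕ) = weightedDegree n b (p b) := by
    rw [← weightedDegree_X_pow_mul_C_mul n b N hα0, weightedDegree, weightedDegree, degree_mul,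
      degree_mul, degree_X_pow, degree_C hα0, add_zero, degree_eq_natDegree hqb,
      degree_eq_natDegree hpb, hN, Nat.cast_add]
  have hle : weightedDegree n j (p j + X ^ N * C α * q j) ≤ weightedDegree n b (p b) :=
    calc weightedDegree n j (p j + X ^ N * C α * q j)
        ≤ max (weightedDegree n j (p j))
            (weightedDegree n j (q j) + ((n * N : ℕ) : WithBot ℕ)) :=
          weightedDegree_X_pow_mul_C_mul n j N hα0 (q j) ▸ weightedDegree_add_le _ _ _ _
      _ ≤ max (weightedDegree n b (p b))
            (weightedDegree n b (q b) + ((n * N : ℕ) : WithBot ℕ)) :=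
          max_le_max (hp j) (add_le_add (hq j) le_rfl)
      _ = weightedDegree n b (p b) := by rw [hshift, max_self]
  refine hle.lt_of_ne fun heq => ?_
  obtain ⟨hjb, hdeg⟩ := eq_of_weightedDegree_eq j.isLt b.isLt hpb heq
  rw [Fin.ext hjb] at hdeg
  exact (degree_add_X_pow_mul_C_mul_lt hpb hN hα).ne hdeg

end Cancellation

section RowOperation

variable {ι κ R : Type*} [DecidableEq ι] [Fintype ι] [Semiring R]

theorem one_add_single_mul_row_of_ne (M : Matrix ι κ R) (x : R) {a c : ι} (o : ι) (h : a ≠ c) :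
    ((1 + single c o x : Matrix ι ι R) * M) a = M a := by
  ext j
  rw [Matrix.add_mul, Matrix.one_mul, Matrix.add_apply, single_mul_apply_of_ne _ _ _ _ _ h,
    add_zero]

theorem one_add_single_mul_apply_same (M : Matrix ι κ R) (x : R) (c o : ι) (j : κ) :
    ((1 + single c o x : Matrix ι ι R) * M) c j = M c j + x * M o j := by
  rw [Matrix.add_mul, Matrix.one_mul, Matrix.add_apply, single_mul_apply_same]

end RowOperation

section DegreeMatrix

variable {F : Type*} [Field F] {n : ℕ}

theorem isElemUnitOffDiag_one_add_single {c o : Fin n} {N : ℕ} (hco : c ≠ o)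
    (hN : o < c → 0 < N) (α : F) : IsElemUnitOffDiag (1 + single c o (X ^ N * C α)) := by
  rcases hco.lt_or_gt with h | h
  · exact Or.inl ⟨c, o, N, α, h, rfl⟩
  · exact Or.inr ⟨c, o, N, α, h, hN h, rfl⟩

theorem degMat_apply_eq_map (M : Matrix (Fin n) (Fin n) F[X]) (a j : Fin n) :
    degMat M a j = (weightedDegree n j (M a j)).map fun w : ℕ => (w : ℤ) - a := by
  rw [degMat, of_apply, weightedDegree, WithBot.map_map]
  congr 1
  funext d
  push_cast [Function.comp_apply]
  ring

theorem strictMono_natCast_sub (a : ℤ) : StrictMono fun w : ℕ => (w : ℤ) - a :=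
  fun _ _ h => Int.sub_lt_sub_right (Int.ofNat_lt.mpr h) a

theorem degMat_le_degMat_iff {M M' : Matrix (Fin n) (Fin n) F[X]} {a j b : Fin n} :
    degMat M a j ≤ degMat M' a b ↔ weightedDegree n j (M a j) ≤ weightedDegree n b (M' a b) := by
  rw [degMat_apply_eq_map, degMat_apply_eq_map]
  exact (strictMono_natCast_sub _).withBot_map.le_iff_le

theorem degMat_lt_degMat_iff {M M' : Matrix (Fin n) (Fin n) F[X]} {a j b : Fin n} :
    degMat M a j < degMat M' a b ↔ weightedDegree n j (M a j) < weightedDegree n b (M' a b) := by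
  rw [degMat_apply_eq_map, degMat_apply_eq_map]
  exact (strictMono_natCast_sub _).withBot_map.lt_iff_lt

theorem degMat_eq_bot_iff {M : Matrix (Fin n) (Fin n) F[X]} {a j : Fin n} :
    degMat M a j = ⊥ ↔ M a j = 0 := by
  simp [degMat]

theorem apply_ne_zero_of_degMat_eq_sup {M : Matrix (Fin n) (Fin n) F[X]} {a b : Fin n}
    (ha : M a ≠ 0) (hb : degMat M a b = Finset.univ.sup fun j => degMat M a j) : M a b ≠ 0 := by
  intro h0
  obtain ⟨j, hj⟩ := Function.ne_iff.mp ha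
  have hle : degMat M a j ≤ degMat M a b :=
    hb ▸ Finset.le_sup (f := degMat M a) (Finset.mem_univ j)
  rw [degMat_eq_bot_iff.mpr h0, le_bot_iff, degMat_eq_bot_iff] at hle
  exact hj hle

theorem exists_isElemUnitOffDiag_lt_degMat {M : Matrix (Fin n) (Fin n) F[X]} {c o b : Fin n}
    (hco : c ≠ o) (hc : M c b ≠ 0) (ho : M o b ≠ 0)
    (hcmax : ∀ j, degMat M c j ≤ degMat M c b) (homax : ∀ j, degMat M o j ≤ degMat M o b)
    (hdeg : (M o b).natDegree ≤ (M c b).natDegree)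
    (htype : o < c → (M o b).natDegree < (M c b).natDegree) :
    ∃ E, IsElemUnitOffDiag E ∧ (∀ a, a ≠ c → (E * M) a = M a) ∧
      ∀ j, degMat (E * M) c j < degMat M c b := by
  set N := (M c b).natDegree - (M o b).natDegree
  set α := -((M c b).leadingCoeff / (M o b).leadingCoeff)
  have hα : α * (M o b).leadingCoeff = -(M c b).leadingCoeff := by
    rw [neg_mul, div_mul_cancel₀ _ (leadingCoeff_ne_zero.mpr ho)]
  refine ⟨1 + single c o (X ^ N * C α),
    isElemUnitOffDiag_one_add_single hco (fun h => Nat.sub_pos_of_lt (htype h)) α,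
    fun a ha => one_add_single_mul_row_of_ne M _ o ha, fun j => ?_⟩
  rw [degMat_lt_degMat_iff, one_add_single_mul_apply_same]
  exact weightedDegree_add_X_pow_mul_C_mul_lt (p := M c) (q := M o) hc (by omega) hα
    (fun j => degMat_le_degMat_iff.mp (hcmax j)) (fun j => degMat_le_degMat_iff.mp (homax j)) j

theorem exists_isElemUnitOffDiag_lt_sup_degMat {M : Matrix (Fin n) (Fin n) F[X]} {c o b : Fin n}
    (hco : c ≠ o) (hc : M c ≠ 0) (ho : M o ≠ 0)
    (hcb : degMat M c b = Finset.univ.sup fun j => degMat M c j)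
    (hob : degMat M o b = Finset.univ.sup fun j => degMat M o j)
    (hdeg : (M o b).natDegree ≤ (M c b).natDegree)
    (htype : o < c → (M o b).natDegree < (M c b).natDegree) :
    ∃ E, IsElemUnitOffDiag E ∧ ∃ c : Fin n, (∀ a, a ≠ c → (E * M) a = M a) ∧
      ∀ j, degMat (E * M) c j < Finset.univ.sup fun j' => degMat M c j' := by
  obtain ⟨E, hE, hrows, hlt⟩ := exists_isElemUnitOffDiag_lt_degMat hco
    (apply_ne_zero_of_degMat_eq_sup hc hcb) (apply_ne_zero_of_degMat_eq_sup ho hob)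
    (fun j => hcb ▸ Finset.le_sup (f := degMat M c) (Finset.mem_univ j))
    (fun j => hob ▸ Finset.le_sup (f := degMat M o) (Finset.mem_univ j)) hdeg htype
  exact ⟨E, hE, c, hrows, hcb ▸ hlt⟩

end DegreeMatrix

theorem reduction_step_general {F : Type*} [Field F] {n : ℕ}
    (M : Matrix (Fin n) (Fin n) (Polynomial F)) (hnsr : ¬ SemiReduced M) :
    ∃ E : Matrix (Fin n) (Fin n) (Polynomial F), IsElemUnitOffDiag E ∧
      ∃ c : Fin n,
        (∀ a : Fin n, a ≠ c → (E * M) a = M a) ∧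
        (∀ b : Fin n, degMat (E * M) c b < Finset.univ.sup (fun b' => degMat M c b')) := by
  obtain ⟨a, a', b, hne, ha, ha', hab, ha'b⟩ : ∃ a a' b, a ≠ a' ∧ M a ≠ 0 ∧ M a' ≠ 0 ∧
      degMat M a b = Finset.univ.sup (fun j => degMat M a j) ∧
      degMat M a' b = Finset.univ.sup (fun j => degMat M a' j) := by
    simpa [SemiReduced] using hnsr
  rcases lt_trichotomy (M a b).natDegree (M a' b).natDegree with h | h | h
  · exact exists_isElemUnitOffDiag_lt_sup_degMat hne.symm ha' ha ha'b hab h.le fun _ => h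
  · rcases hne.lt_or_gt with hlt | hlt
    · exact exists_isElemUnitOffDiag_lt_sup_degMat hne ha ha' hab ha'b h.ge
        fun h' => absurd hlt h'.not_gt
    · exact exists_isElemUnitOffDiag_lt_sup_degMat hne.symm ha' ha ha'b hab h.le
        fun h' => absurd hlt h'.not_gt
  · exact exists_isElemUnitOffDiag_lt_sup_degMat hne ha ha' hab ha'b h.le fun _ => h

/-- If `M ∈ 𝓜` is not semi-reduced, then there is an elementary unit
`E` of type (ii) or (iii) and a row index `c` such that `E·M` agrees with `M` in all rows
except row `c`, and every entry of row `c` of `𝒟(E·M)` is strictly smaller than the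
maximum of row `c` of `𝒟(M)`. -/
theorem reduction_step {F : Type*} [Field F] [Fintype F] {n : ℕ} (hn : 2 ≤ n)
    (M : Matrix (Fin n) (Fin n) (Polynomial F)) (hM : InM M) (hnsr : ¬ SemiReduced M) :
    ∃ E : Matrix (Fin n) (Fin n) (Polynomial F), IsElemUnitOffDiag E ∧
      ∃ c : Fin n,
        (∀ a : Fin n, a ≠ c → (E * M) a = M a) ∧
        (∀ b : Fin n, degMat (E * M) c b < Finset.univ.sup (fun b' => degMat M c b')) :=
  reduction_step_general M hnsr
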